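/- Let k ≥ 0 and let M = ℤ^{k+1} with standard basis v₀, …, v_k. Fix integers P > 0, m₀, and for 1 ≤ j ≤ k integers G_j and non-negative integers Q_j. Suppose u₀, …, u_k ∈ M are vectors, written u_j = Σ_s a_s^{(j)} v_s, satisfying: (a) |a₀^{(0)}|·P + Σ_{s=1}^k |a_s^{(0)}|·Q_s + m₀ ≤ G₀ for some integer G₀ with G₀ < P + m₀; and (b) for each 1 ≤ j ≤ k, |a₀^{(j)}|·P + Σ_{s=1}^k |a_s^{(j)}|·Q_s + m_j ≤ G_j for integers m_j with G_j < P + m_j. Then a₀^{(j)} = 0 for all 0 ≤ j ≤ k, and consequently u₀, …, u_k do not form a ℤ-basis of M. -/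

import Mathlib

/-! Unless `a₀ = 0`, the term `|a₀| * P` alone is at least `P`, more than the slack `G - m < P`
that each inequality leaves, so every coefficient on `v₀` vanishes. A basis of `ℤ^{k+1}` cannot lie in the kernel of the
coordinate functional of `v₀`, since that functional would then vanish identically. -/

theorem Int.eq_zero_of_abs_mul_lt {a P : ℤ} (hP : 0 < P) (h : |a| * P < P) : a = 0 :=
  Int.abs_lt_one_iff.mp <| lt_of_mul_lt_mul_right (by simpa using h) hP.le

theorem Int.eq_zero_of_abs_mul_add_le {a P S m G : ℤ} (hP : 0 < P) (hS : 0 ≤ S)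
    (hG : G < P + m) (h : |a| * P + S + m ≤ G) : a = 0 :=
  Int.eq_zero_of_abs_mul_lt hP (by linarith)

theorem Module.Basis.not_forall_apply_eq_zero {ι η R : Type*} [Semiring R] [Nontrivial R]
    (b : Module.Basis ι R (η → R)) (i : η) : ¬ ∀ j, b j i = 0 := by
  classical
  intro hb
  have hproj : (LinearMap.proj i : (η → R) →ₗ[R] R) = 0 := b.ext fun j => hb j
  simpa using LinearMap.congr_fun hproj (Pi.single i 1)

/-- Abstract form of Proposition 5.13: the adjunction-type inequalities force
every vector of a candidate basis to have vanishing coefficient on v₀, hence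
the candidate vectors do not form a basis of ℤ^{k+1}. -/
theorem abstract_adjunction_no_basis (k : ℕ) (P : ℤ) (hP : 0 < P)
    (m G Q : Fin (k + 1) → ℤ) (hQ : ∀ s, 0 ≤ Q s)
    (u : Fin (k + 1) → Fin (k + 1) → ℤ)
    (hG : ∀ j, G j < P + m j)
    (h : ∀ j, |u j 0| * P +
        (∑ s ∈ Finset.univ.filter (fun s : Fin (k + 1) => s ≠ 0), |u j s| * Q s)
        + m j ≤ G j) :
    (∀ j, u j 0 = 0) ∧
      ¬ ∃ b : Module.Basis (Fin (k + 1)) ℤ (Fin (k + 1) → ℤ), ⇑b = u := by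
  have hu : ∀ j, u j 0 = 0 := fun j =>
    Int.eq_zero_of_abs_mul_add_le hP
      (Finset.sum_nonneg fun s _ => mul_nonneg (abs_nonneg _) (hQ s)) (hG j) (h j)
  refine ⟨hu, ?_⟩
  rintro ⟨b, rfl⟩
  exact b.not_forall_apply_eq_zero 0 hu
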